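/- For all integers n ≥ 0 and all b, s ∈ {0,…,n}, the matrix P_{n,b,s} defined by the recursion P_{n,0,s} = (1) and P_{n,b,s} = (s/n)(P ⊗ P_{n−1,b−1,s−1}) + (1 − s/n)(I₂ ⊗ P_{n−1,b−1,s}) satisfies P_{n,b,s} = (T^{⊗b})ᵀ · diag(λ_{n,a_1,s}, …, λ_{n,a_{2^b},s}) · T^{⊗b}, where T = (1/√2)·[[1,1],[−1,1]]. -/

import Mathlib

open Finset Matrix

/-- `λ_{n,b,s} = ∑_{t=0}^{b} C(b,t) (−2)^t (s)_t/(n)_t`. -/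
noncomputable def lam (n b s : ℕ) : ℝ :=
  ∑ t ∈ Finset.range (b + 1),
    (b.choose t : ℝ) * (-2 : ℝ) ^ t * (s.descFactorial t : ℝ) / (n.descFactorial t : ℝ)

/-- The entries of the vector `𝐚_b`, defined by `𝐚_1 = (0,1)` and
`𝐚_b = (𝐚_{b−1}, 𝐚_{b−1} + 𝟏)`; `avec b i` is the `(i+1)`-st entry of `𝐚_b`. -/
def avec : (b : ℕ) → Fin (2 ^ b) → ℕ
  | 0, _ => 0
  | b + 1, i =>
    if h : (i : ℕ) < 2 ^ b then avec b ⟨i, h⟩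
    else avec b ⟨(i : ℕ) - 2 ^ b, by
        have h2 : (i : ℕ) < 2 ^ b * 2 := by rw [← pow_succ]; exact i.isLt
        omega⟩ + 1

/-- Kronecker product of a `2 × 2` matrix with a `k × k` matrix, with indices flattened. -/
noncomputable def kron2 {k : ℕ} (A : Matrix (Fin 2) (Fin 2) ℝ) (B : Matrix (Fin k) (Fin k) ℝ) :
    Matrix (Fin (2 * k)) (Fin (2 * k)) ℝ :=
  Matrix.of fun i j =>
    A ⟨(i : ℕ) / k, by
        rcases Nat.eq_zero_or_pos k with h | h
        · exact absurd i.isLt (by omega)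
        · exact (Nat.div_lt_iff_lt_mul h).mpr (by have := i.isLt; omega)⟩
      ⟨(j : ℕ) / k, by
        rcases Nat.eq_zero_or_pos k with h | h
        · exact absurd j.isLt (by omega)
        · exact (Nat.div_lt_iff_lt_mul h).mpr (by have := j.isLt; omega)⟩
    * B ⟨(i : ℕ) % k, by
        rcases Nat.eq_zero_or_pos k with h | h
        · exact absurd i.isLt (by omega)
        · exact Nat.mod_lt _ h⟩
      ⟨(j : ℕ) % k, by
        rcases Nat.eq_zero_or_pos k with h | h
        · exact absurd j.isLt (by omega)
        · exact Nat.mod_lt _ h⟩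

theorem two_mul_pow (b : ℕ) : 2 * 2 ^ b = 2 ^ (b + 1) := by rw [pow_succ]; ring

/-- `P = [[0,1],[1,0]]`. -/
noncomputable def pM : Matrix (Fin 2) (Fin 2) ℝ := !![0, 1; 1, 0]

/-- `T = (1/√2)·[[1,1],[−1,1]]`. -/
noncomputable def tM : Matrix (Fin 2) (Fin 2) ℝ :=
  (Real.sqrt 2)⁻¹ • !![1, 1; -1, 1]

/-- The matrices `P_{n,b,s}`, defined by the recursion
`P_{n,0,s} = (1)` and
`P_{n,b,s} = (s/n)(P ⊗ P_{n−1,b−1,s−1}) + (1 − s/n)(I₂ ⊗ P_{n−1,b−1,s})`. -/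
noncomputable def Pmat : (b : ℕ) → ℕ → ℕ → Matrix (Fin (2 ^ b)) (Fin (2 ^ b)) ℝ
  | 0, _, _ => 1
  | b + 1, n, s =>
    Matrix.reindex (finCongr (two_mul_pow b)) (finCongr (two_mul_pow b))
      (((s : ℝ) / (n : ℝ)) • kron2 pM (Pmat b (n - 1) (s - 1))
        + (1 - (s : ℝ) / (n : ℝ)) • kron2 (1 : Matrix (Fin 2) (Fin 2) ℝ) (Pmat b (n - 1) s))

/-- The `b`-fold Kronecker power `T^{⊗b}`. -/
noncomputable def Tpow : (b : ℕ) → Matrix (Fin (2 ^ b)) (Fin (2 ^ b)) ℝ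
  | 0 => 1
  | b + 1 =>
    Matrix.reindex (finCongr (two_mul_pow b)) (finCongr (two_mul_pow b)) (kron2 tM (Tpow b))

/-!
`T` diagonalises `P`: `Tᵀ T = 1` and `Tᵀ diag(1, -1) T = P`. Since conjugation by a Kronecker
product factorises, `(A ⊗ B)ᵀ (C ⊗ D) (A ⊗ B) = (Aᵀ C A) ⊗ (Bᵀ D B)`, induction on `b` turns the
recursion for `P_{n,b,s}` into one for the diagonal entries. Writing the indices of `𝐚_{b+1}` as
pairs `(p, q) ∈ Fin 2 × Fin 2^b`, the entry `a = a_q + p` must satisfy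
`λ_{n,a_q+p,s} = (s/n) (-1)^p λ_{n-1,a_q,s-1} + (1 - s/n) λ_{n-1,a_q,s}`.
For `p = 0` this is, term by term, the identity
`(s)_t/(n)_t = (s/n) (s-1)_t/(n-1)_t + (1 - s/n) (s)_t/(n-1)_t` (for `t < n`); for `p = 1`
Pascal's rule gives `λ_{n,a+1,s} = λ_{n,a,s} - 2 (s/n) λ_{n-1,a,s-1}`, because
`(s)_{t+1}/(n)_{t+1} = (s/n) (s-1)_t/(n-1)_t`.
-/

theorem Nat.descFactorial_succ_eq_mul_pred (s t : ℕ) :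
    s.descFactorial (t + 1) = s * (s - 1).descFactorial t := by
  cases s with
  | zero => simp
  | succ s => exact Nat.succ_descFactorial_succ s t

theorem Nat.cast_descFactorial_succ {R : Type*} [Ring R] (s t : ℕ) :
    (s.descFactorial (t + 1) : R) = ((s : R) - t) * s.descFactorial t := by
  rcases le_or_gt t s with h | h
  · rw [Nat.descFactorial_succ, Nat.cast_mul, Nat.cast_sub h]
  · simp [Nat.descFactorial_eq_zero_iff_lt.mpr h]

theorem descFactorial_div_descFactorial_succ {K : Type*} [Field K] (n s t : ℕ) :
    (s.descFactorial (t + 1) : K) / n.descFactorial (t + 1)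
      = s / n * ((s - 1).descFactorial t / (n - 1).descFactorial t) := by
  rw [Nat.descFactorial_succ_eq_mul_pred, Nat.descFactorial_succ_eq_mul_pred, Nat.cast_mul,
    Nat.cast_mul, mul_div_mul_comm]

theorem descFactorial_div_descFactorial_eq_average {K : Type*} [Field K] [CharZero K]
    {n t : ℕ} (s : ℕ) (h : t < n) :
    (s.descFactorial t : K) / n.descFactorial t
      = s / n * ((s - 1).descFactorial t / (n - 1).descFactorial t)
        + (1 - s / n) * (s.descFactorial t / (n - 1).descFactorial t) := by
  have hn : (n : K) ≠ 0 := Nat.cast_ne_zero.mpr (by omega)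
  have hdn : (n.descFactorial t : K) ≠ 0 := by
    exact_mod_cast (Nat.descFactorial_pos.mpr h.le).ne'
  have hdn' : ((n - 1).descFactorial t : K) ≠ 0 := by
    exact_mod_cast (Nat.descFactorial_pos.mpr (by omega)).ne'
  have hs := Nat.cast_descFactorial_succ (R := K) s t
  have hn' := Nat.cast_descFactorial_succ (R := K) n t
  rw [Nat.descFactorial_succ_eq_mul_pred, Nat.cast_mul] at hs hn'
  field_simp
  linear_combination (s.descFactorial t : K) * hn' - (n.descFactorial t : K) * hs

theorem lam_zero_left (n s : ℕ) : lam n 0 s = 1 := by simp [lam]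

theorem lam_eq_average {n a : ℕ} (s : ℕ) (h : a < n) :
    lam n a s = s / n * lam (n - 1) a (s - 1) + (1 - s / n) * lam (n - 1) a s := by
  simp only [lam, mul_sum, ← sum_add_distrib]
  refine sum_congr rfl fun t ht => ?_
  have htn : t < n := (Nat.lt_succ_iff.mp (mem_range.mp ht)).trans_lt h
  rw [mul_div_assoc, descFactorial_div_descFactorial_eq_average s htn]
  ring

theorem lam_eq_sum_choose_mul (n a s : ℕ) :
    lam n a s = ∑ t ∈ range (a + 1),
      (a.choose t : ℝ) * ((-2) ^ t * (s.descFactorial t / n.descFactorial t)) := by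
  simp only [lam, mul_div_assoc, mul_assoc]

theorem lam_succ_left (n a s : ℕ) :
    lam n (a + 1) s = lam n a s - 2 * (s / n) * lam (n - 1) a (s - 1) := by
  rw [lam_eq_sum_choose_mul, sum_choose_succ_mul (fun t _ => (-2 : ℝ) ^ t * _),
    ← lam_eq_sum_choose_mul, lam_eq_sum_choose_mul (n - 1), mul_sum, sub_eq_add_neg,
    ← sum_neg_distrib]
  congr 1
  refine sum_congr rfl fun t _ => ?_
  rw [descFactorial_div_descFactorial_succ]
  ring

theorem lam_add_fin_two {n a : ℕ} (s : ℕ) (p : Fin 2) (h : a < n) :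
    lam n (a + p) s
      = s / n * ((-1) ^ (p : ℕ) * lam (n - 1) a (s - 1)) + (1 - s / n) * lam (n - 1) a s := by
  fin_cases p
  · simpa using lam_eq_average s h
  · simp only [lam_succ_left, lam_eq_average s h]
    ring

theorem avec_le (b : ℕ) (i : Fin (2 ^ b)) : avec b i ≤ b := by
  induction b with
  | zero => simp [avec]
  | succ b ih =>
    rw [avec]
    split
    · exact (ih _).trans b.le_succ
    · exact Nat.add_le_add_right (ih _) 1

def finTwoProdPowEquiv (b : ℕ) : Fin 2 × Fin (2 ^ b) ≃ Fin (2 ^ (b + 1)) :=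
  finProdFinEquiv.trans (finCongr (two_mul_pow b))

theorem avec_finTwoProdPowEquiv (b : ℕ) (p : Fin 2) (q : Fin (2 ^ b)) :
    avec (b + 1) (finTwoProdPowEquiv b (p, q)) = avec b q + p := by
  have hval : (finTwoProdPowEquiv b (p, q) : ℕ) = q + 2 ^ b * p := by
    simp [finTwoProdPowEquiv]
  have hq := q.isLt
  rw [avec]
  match p with
  | 0 =>
    rw [Fin.val_zero, mul_zero, add_zero] at hval
    rw [dif_pos (by omega)]
    exact congrArg (avec b) (Fin.ext hval)
  | 1 =>
    rw [Fin.val_one, mul_one] at hval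
    rw [dif_neg (by omega)]
    exact congrArg (avec b · + 1) (Fin.ext (by simp only; omega))

open Kronecker

theorem reindex_transpose_mul_mul {m n R : Type*} [Fintype m] [Fintype n]
    [NonUnitalNonAssocSemiring R] (e : m ≃ n) (T D : Matrix m m R) :
    (reindex e e T)ᵀ * reindex e e D * reindex e e T = reindex e e (Tᵀ * D * T) := by
  simp only [reindex_apply, transpose_submatrix, submatrix_mul_equiv]

theorem kronecker_transpose_mul_mul {l m n p R : Type*} [Fintype l] [Fintype n] [CommSemiring R]
    (A : Matrix l m R) (B : Matrix n p R) (C : Matrix l l R) (D : Matrix n n R) :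
    (A ⊗ₖ B)ᵀ * (C ⊗ₖ D) * (A ⊗ₖ B) = (Aᵀ * C * A) ⊗ₖ (Bᵀ * D * B) := by
  rw [← kroneckerMap_transpose, ← mul_kronecker_mul, ← mul_kronecker_mul]

theorem tM_transpose_mul_self : tMᵀ * tM = 1 := by
  ext i j
  fin_cases i <;> fin_cases j <;> simp [tM, mul_apply, Fin.sum_univ_two, TsirelsonInequality.sqrt_two_inv_mul_self] <;> norm_num

theorem tM_transpose_mul_diagonal_mul_self :
    tMᵀ * diagonal (fun p : Fin 2 => (-1 : ℝ) ^ (p : ℕ)) * tM = pM := by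
  ext i j
  fin_cases i <;> fin_cases j <;> simp [tM, pM, mul_apply, Fin.sum_univ_two, TsirelsonInequality.sqrt_two_inv_mul_self] <;> norm_num

theorem Pmat_succ (b n s : ℕ) :
    Pmat (b + 1) n s = reindex (finTwoProdPowEquiv b) (finTwoProdPowEquiv b)
      ((s / n : ℝ) • (pM ⊗ₖ Pmat b (n - 1) (s - 1))
        + (1 - s / n : ℝ) • ((1 : Matrix (Fin 2) (Fin 2) ℝ) ⊗ₖ Pmat b (n - 1) s)) :=
  rfl

theorem Tpow_succ (b : ℕ) :
    Tpow (b + 1) = reindex (finTwoProdPowEquiv b) (finTwoProdPowEquiv b) (tM ⊗ₖ Tpow b) :=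
  rfl

theorem diagonal_avec_succ (f : ℕ → ℝ) (b : ℕ) :
    diagonal (fun i => f (avec (b + 1) i))
      = reindex (finTwoProdPowEquiv b) (finTwoProdPowEquiv b)
          (diagonal fun pq : Fin 2 × Fin (2 ^ b) => f (avec b pq.2 + pq.1)) := by
  rw [reindex_apply, submatrix_diagonal_equiv]
  congr 1
  funext i
  obtain ⟨⟨p, q⟩, rfl⟩ := (finTwoProdPowEquiv b).surjective i
  simp [avec_finTwoProdPowEquiv]

theorem diagonal_lam_add_fin_two {n b : ℕ} (s : ℕ) (h : b < n) :
    diagonal (fun pq : Fin 2 × Fin (2 ^ b) => lam n (avec b pq.2 + pq.1) s)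
      = (s / n : ℝ) • (diagonal (fun p : Fin 2 => (-1 : ℝ) ^ (p : ℕ))
            ⊗ₖ diagonal (fun q => lam (n - 1) (avec b q) (s - 1)))
        + (1 - s / n : ℝ) • ((1 : Matrix (Fin 2) (Fin 2) ℝ)
            ⊗ₖ diagonal (fun q => lam (n - 1) (avec b q) s)) := by
  rw [← diagonal_one, diagonal_kronecker_diagonal, diagonal_kronecker_diagonal,
    ← diagonal_smul, ← diagonal_smul, diagonal_add]
  congr 1
  funext pq
  simp [lam_add_fin_two s pq.1 ((avec_le b pq.2).trans_lt h)]

/-- `P_{n,b,s} = (T^{⊗b})ᵀ · diag(λ_{n,a_1,s}, …, λ_{n,a_{2^b},s}) · T^{⊗b}`. -/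
theorem Pmat_eq_conj_diagonal (n b s : ℕ) (hb : b ≤ n) (hs : s ≤ n) :
    Pmat b n s
      = (Tpow b)ᵀ * Matrix.diagonal (fun i => lam n (avec b i) s) * Tpow b := by
  induction b generalizing n s with
  | zero => simp [Pmat, Tpow, avec, lam_zero_left]
  | succ b ih =>
    rw [Pmat_succ, Tpow_succ, diagonal_avec_succ (lam n · s), reindex_transpose_mul_mul,
      diagonal_lam_add_fin_two s hb, Matrix.mul_add, Matrix.add_mul, Matrix.mul_smul,
      Matrix.smul_mul, Matrix.mul_smul, Matrix.smul_mul, kronecker_transpose_mul_mul,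
      kronecker_transpose_mul_mul, tM_transpose_mul_diagonal_mul_self, Matrix.mul_one,
      tM_transpose_mul_self, ← ih (n - 1) (s - 1) (by omega) (by omega)]
    congr 2
    -- the induction hypothesis does not cover `P_{n-1,b,n}`, but its coefficient `1 - n/n` is 0
    rcases hs.lt_or_eq with hs | rfl
    · rw [ih (n - 1) s (by omega) (by omega)]
    · have hs0 : (s : ℝ) ≠ 0 := Nat.cast_ne_zero.mpr (by omega)
      simp [hs0]
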